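/- Let 𝒯 = ∏_{n∈ℕ} [2^n] with the product topology (each factor discrete), and let μ be a Maharam submeasure on the Borel σ-algebra of 𝒯. Then for every Borel set A ⊆ 𝒯 × 𝒯 the map x ↦ μ(A_x) is Borel measurable, where A_x = {y ∈ 𝒯 : (x,y) ∈ A}. In particular, the set {x : μ(A_x) = 0} is Borel. -/

import Mathlib

/-!
A Maharam submeasure is continuous along monotone sequences of Borel sets, because
`|μ C - μ T| ≤ μ (C ∆ T)` by monotonicity and subadditivity. Applied to sections, `A_n ↑ A` or
`A_n ↓ A` gives `μ ((A_n)_x) → μ (A_x)` for every `x`, so the sets `A` for which `x ↦ μ (A_x)` is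
measurable form a monotone class. It contains the algebra of measurable sets whose section map
`x ↦ A_x` is a simple function (for instance measurable rectangles), on which `x ↦ μ (A_x)` is
simple as well. By the monotone class theorem it contains the σ-algebra that algebra generates,
which is the Borel σ-algebra of the product.
-/

open Filter Topology

/-- 𝒯 = ∏_{n∈ℕ} [2^n]  (the paper's index `n ∈ {1,2,…}` corresponds to the Lean
index `n ∈ {0,1,…}` via `n ↦ n+1`).  Each factor is a finite discrete space; the Borel
σ-algebra of the product is the product σ-algebra used below. -/
abbrev TalSpace : Type := (n : ℕ) → Fin (2 ^ (n + 1))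

open MeasureTheory Set
open scoped symmDiff

section MonotoneClass

variable {α : Type*} {𝒜 M : Set (Set α)}

structure IsMonotoneClass (M : Set (Set α)) : Prop where
  iUnion_mem : ∀ ⦃f : ℕ → Set α⦄, Monotone f → (∀ n, f n ∈ M) → ⋃ n, f n ∈ M
  iInter_mem : ∀ ⦃f : ℕ → Set α⦄, Antitone f → (∀ n, f n ∈ M) → ⋂ n, f n ∈ M

inductive GenerateMonotone (𝒜 : Set (Set α)) : Set α → Prop
  | basic (s : Set α) : s ∈ 𝒜 → GenerateMonotone 𝒜 s
  | iUnion (f : ℕ → Set α) : Monotone f → (∀ n, GenerateMonotone 𝒜 (f n)) →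
      GenerateMonotone 𝒜 (⋃ n, f n)
  | iInter (f : ℕ → Set α) : Antitone f → (∀ n, GenerateMonotone 𝒜 (f n)) →
      GenerateMonotone 𝒜 (⋂ n, f n)

namespace GenerateMonotone

theorem mem_of_isMonotoneClass (hM : IsMonotoneClass M) (h𝒜M : 𝒜 ⊆ M) {s : Set α}
    (hs : GenerateMonotone 𝒜 s) : s ∈ M := by
  induction hs with
  | basic s hs => exact h𝒜M hs
  | iUnion f hf _ ih => exact hM.iUnion_mem hf ih
  | iInter f hf _ ih => exact hM.iInter_mem hf ih

theorem compl (h𝒜 : IsSetAlgebra 𝒜) {s : Set α} (hs : GenerateMonotone 𝒜 s) :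
    GenerateMonotone 𝒜 sᶜ := by
  induction hs with
  | basic s hs => exact basic _ (h𝒜.compl_mem hs)
  | iUnion f hf _ ih =>
    rw [compl_iUnion]
    exact iInter _ (fun _ _ hmn => compl_subset_compl.2 (hf hmn)) ih
  | iInter f hf _ ih =>
    rw [compl_iInter]
    exact iUnion _ (fun _ _ hmn => compl_subset_compl.2 (hf hmn)) ih

theorem union_of_mem (h𝒜 : IsSetAlgebra 𝒜) {s t : Set α} (hs : s ∈ 𝒜)
    (ht : GenerateMonotone 𝒜 t) : GenerateMonotone 𝒜 (s ∪ t) := by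
  induction ht with
  | basic t ht => exact basic _ (h𝒜.union_mem hs ht)
  | iUnion f hf _ ih =>
    rw [union_iUnion]
    exact iUnion _ (fun _ _ hmn => union_subset_union_right s (hf hmn)) ih
  | iInter f hf _ ih =>
    rw [union_iInter]
    exact iInter _ (fun _ _ hmn => union_subset_union_right s (hf hmn)) ih

theorem union (h𝒜 : IsSetAlgebra 𝒜) {s t : Set α} (hs : GenerateMonotone 𝒜 s)
    (ht : GenerateMonotone 𝒜 t) : GenerateMonotone 𝒜 (s ∪ t) := by
  induction hs with
  | basic s hs => exact union_of_mem h𝒜 hs ht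
  | iUnion f hf _ ih =>
    rw [iUnion_union]
    exact iUnion _ (fun _ _ hmn => union_subset_union_left t (hf hmn)) ih
  | iInter f hf _ ih =>
    rw [iInter_union]
    exact iInter _ (fun _ _ hmn => union_subset_union_left t (hf hmn)) ih

theorem iUnion_nat (h𝒜 : IsSetAlgebra 𝒜) {f : ℕ → Set α}
    (hf : ∀ n, GenerateMonotone 𝒜 (f n)) : GenerateMonotone 𝒜 (⋃ n, f n) := by
  have hacc : ∀ n, GenerateMonotone 𝒜 (accumulate f n) := by
    intro n
    induction n with
    | zero => simpa using hf 0
    | succ n ih => rw [accumulate_succ]; exact ih.union h𝒜 (hf _)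
  rw [← iUnion_accumulate]
  exact iUnion _ monotone_accumulate hacc

end GenerateMonotone

theorem IsMonotoneClass.mem_of_measurableSet_generateFrom (hM : IsMonotoneClass M)
    (h𝒜 : IsSetAlgebra 𝒜) (h𝒜M : 𝒜 ⊆ M) {s : Set α}
    (hs : MeasurableSet[MeasurableSpace.generateFrom 𝒜] s) : s ∈ M := by
  refine GenerateMonotone.mem_of_isMonotoneClass hM h𝒜M ?_
  induction s, hs using MeasurableSpace.generateFrom_induction with
  | hC t ht => exact .basic t ht
  | empty => exact .basic _ h𝒜.empty_mem
  | compl t _ ht => exact ht.compl h𝒜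
  | iUnion f _ hf => exact GenerateMonotone.iUnion_nat h𝒜 hf

end MonotoneClass

section Submeasure

variable {β : Type*} [MeasurableSpace β] {μ : Set β → ℝ}

theorem tendsto_submeasure_of_symmDiff
    (hmono : ∀ A B : Set β, MeasurableSet A → MeasurableSet B → A ⊆ B → μ A ≤ μ B)
    (hsubadd : ∀ A B : Set β, MeasurableSet A → MeasurableSet B → μ (A ∪ B) ≤ μ A + μ B)
    (hcont : ∀ A : ℕ → Set β, (∀ n, MeasurableSet (A n)) → Antitone A →
      (⋂ n, A n) = ∅ → Tendsto (fun n => μ (A n)) atTop (𝓝 0))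
    {C : ℕ → Set β} {T : Set β} (hC : ∀ n, MeasurableSet (C n)) (hT : MeasurableSet T)
    (hanti : Antitone fun n => C n ∆ T) (hempty : ⋂ n, C n ∆ T = ∅) :
    Tendsto (fun n => μ (C n)) atTop (𝓝 (μ T)) := by
  have hle : ∀ {s t : Set β}, MeasurableSet s → MeasurableSet t → μ s ≤ μ (s ∆ t) + μ t :=
    fun hs ht => (hmono _ _ hs ((hs.symmDiff ht).union ht) (le_symmDiff_sup_right _ _)).trans
      (hsubadd _ _ (hs.symmDiff ht) ht)
  rw [tendsto_iff_dist_tendsto_zero]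
  refine squeeze_zero (fun _ => dist_nonneg) (fun n => ?_)
    (hcont _ (fun n => (hC n).symmDiff hT) hanti hempty)
  have hCT := hle (hC n) hT
  have hTC := hle hT (hC n)
  rw [symmDiff_comm] at hTC
  rw [Real.dist_eq, abs_sub_le_iff]
  constructor <;> linarith

theorem tendsto_submeasure_iUnion
    (hmono : ∀ A B : Set β, MeasurableSet A → MeasurableSet B → A ⊆ B → μ A ≤ μ B)
    (hsubadd : ∀ A B : Set β, MeasurableSet A → MeasurableSet B → μ (A ∪ B) ≤ μ A + μ B)
    (hcont : ∀ A : ℕ → Set β, (∀ n, MeasurableSet (A n)) → Antitone A →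
      (⋂ n, A n) = ∅ → Tendsto (fun n => μ (A n)) atTop (𝓝 0))
    {C : ℕ → Set β} (hC : ∀ n, MeasurableSet (C n)) (hCmono : Monotone C) :
    Tendsto (fun n => μ (C n)) atTop (𝓝 (μ (⋃ n, C n))) := by
  have hsd : ∀ n, C n ∆ ⋃ n, C n = (⋃ n, C n) \ C n := fun n => symmDiff_of_le (subset_iUnion C n)
  refine tendsto_submeasure_of_symmDiff hmono hsubadd hcont hC (.iUnion hC) ?_ ?_ <;>
    simp_rw [hsd]
  · exact fun _ _ hmn => sdiff_subset_sdiff_right (hCmono hmn)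
  · rw [← sdiff_iUnion, sdiff_self]

theorem tendsto_submeasure_iInter
    (hmono : ∀ A B : Set β, MeasurableSet A → MeasurableSet B → A ⊆ B → μ A ≤ μ B)
    (hsubadd : ∀ A B : Set β, MeasurableSet A → MeasurableSet B → μ (A ∪ B) ≤ μ A + μ B)
    (hcont : ∀ A : ℕ → Set β, (∀ n, MeasurableSet (A n)) → Antitone A →
      (⋂ n, A n) = ∅ → Tendsto (fun n => μ (A n)) atTop (𝓝 0))
    {C : ℕ → Set β} (hC : ∀ n, MeasurableSet (C n)) (hCanti : Antitone C) :
    Tendsto (fun n => μ (C n)) atTop (𝓝 (μ (⋂ n, C n))) := by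
  have hsd : ∀ n, C n ∆ ⋂ n, C n = C n \ ⋂ n, C n := fun n => symmDiff_of_ge (iInter_subset C n)
  refine tendsto_submeasure_of_symmDiff hmono hsubadd hcont hC (.iInter hC) ?_ ?_ <;>
    simp_rw [hsd]
  · exact fun _ _ hmn => sdiff_subset_sdiff_left (hCanti hmn)
  · simp_rw [sdiff_eq]
    rw [← iInter_inter, inter_compl_self]

end Submeasure

section Sections

variable (α β : Type*) [MeasurableSpace α] [MeasurableSpace β]

def setsWithSimpleSections : Set (Set (α × β)) :=
  {A | MeasurableSet A ∧ ∃ f : SimpleFunc α (Set β), ∀ x, f x = Prod.mk x ⁻¹' A}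

theorem isSetAlgebra_setsWithSimpleSections : IsSetAlgebra (setsWithSimpleSections α β) where
  empty_mem := ⟨.empty, .const α ∅, fun _ => rfl⟩
  compl_mem := fun _ ⟨hA, f, hf⟩ => ⟨hA.compl, f.map compl, fun x => by simp [hf]⟩
  union_mem := fun _ _ ⟨hA, f, hf⟩ ⟨hB, g, hg⟩ => ⟨hA.union hB, f ⊔ g, fun x => by simp [hf, hg]⟩

variable {α β}

theorem prod_mem_setsWithSimpleSections {s : Set α} {t : Set β} (hs : MeasurableSet s)
    (ht : MeasurableSet t) : s ×ˢ t ∈ setsWithSimpleSections α β := by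
  classical
  exact ⟨hs.prod ht, .piecewise s hs (.const α t) (.const α ∅), fun x => by
    simp [SimpleFunc.piecewise_apply, mk_preimage_prod_right_eq_if]⟩

theorem measurableSet_generateFrom_setsWithSimpleSections {A : Set (α × β)}
    (hA : MeasurableSet A) :
    MeasurableSet[MeasurableSpace.generateFrom (setsWithSimpleSections α β)] A := by
  rw [← generateFrom_prod] at hA
  refine MeasurableSpace.generateFrom_mono ?_ _ hA
  rintro _ ⟨s, hs, t, ht, rfl⟩
  exact prod_mem_setsWithSimpleSections hs ht

end Sections

section SubmeasureSections

variable {α β : Type*} [MeasurableSpace α] [MeasurableSpace β] {μ : Set β → ℝ}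

theorem isMonotoneClass_measurable_submeasure_sections
    (hmono : ∀ A B : Set β, MeasurableSet A → MeasurableSet B → A ⊆ B → μ A ≤ μ B)
    (hsubadd : ∀ A B : Set β, MeasurableSet A → MeasurableSet B → μ (A ∪ B) ≤ μ A + μ B)
    (hcont : ∀ A : ℕ → Set β, (∀ n, MeasurableSet (A n)) → Antitone A →
      (⋂ n, A n) = ∅ → Tendsto (fun n => μ (A n)) atTop (𝓝 0)) :
    IsMonotoneClass {A : Set (α × β) | (∀ x, MeasurableSet (Prod.mk x ⁻¹' A)) ∧
      Measurable fun x => μ (Prod.mk x ⁻¹' A)} where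
  iUnion_mem f hf hmem := by
    simp only [mem_ofPred_eq, preimage_iUnion]
    refine ⟨fun x => .iUnion fun n => (hmem n).1 x, measurable_of_tendsto_metrizable
      (fun n => (hmem n).2) (tendsto_pi_nhds.2 fun x => ?_)⟩
    exact tendsto_submeasure_iUnion hmono hsubadd hcont (fun n => (hmem n).1 x)
      fun _ _ hmn => preimage_mono (hf hmn)
  iInter_mem f hf hmem := by
    simp only [mem_ofPred_eq, preimage_iInter]
    refine ⟨fun x => .iInter fun n => (hmem n).1 x, measurable_of_tendsto_metrizable
      (fun n => (hmem n).2) (tendsto_pi_nhds.2 fun x => ?_)⟩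
    exact tendsto_submeasure_iInter hmono hsubadd hcont (fun n => (hmem n).1 x)
      fun _ _ hmn => preimage_mono (hf hmn)

theorem measurable_submeasure_sections_of_mem_setsWithSimpleSections {A : Set (α × β)}
    (hA : A ∈ setsWithSimpleSections α β) : Measurable fun x => μ (Prod.mk x ⁻¹' A) := by
  obtain ⟨-, f, hf⟩ := hA
  have hμf : (fun x => μ (Prod.mk x ⁻¹' A)) = f.map μ := funext fun x => by simp [hf]
  exact hμf ▸ (f.map μ).measurable

theorem measurable_submeasure_sections
    (hmono : ∀ A B : Set β, MeasurableSet A → MeasurableSet B → A ⊆ B → μ A ≤ μ B)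
    (hsubadd : ∀ A B : Set β, MeasurableSet A → MeasurableSet B → μ (A ∪ B) ≤ μ A + μ B)
    (hcont : ∀ A : ℕ → Set β, (∀ n, MeasurableSet (A n)) → Antitone A →
      (⋂ n, A n) = ∅ → Tendsto (fun n => μ (A n)) atTop (𝓝 0))
    {A : Set (α × β)} (hA : MeasurableSet A) : Measurable fun x => μ (Prod.mk x ⁻¹' A) := by
  have hM := isMonotoneClass_measurable_submeasure_sections (α := α) hmono hsubadd hcont
  exact (hM.mem_of_measurableSet_generateFrom (isSetAlgebra_setsWithSimpleSections α β)
    (fun _ hB => ⟨fun _ => measurable_prodMk_left hB.1,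
      measurable_submeasure_sections_of_mem_setsWithSimpleSections hB⟩)
    (measurableSet_generateFrom_setsWithSimpleSections hA)).2

end SubmeasureSections

theorem statement4 (μ : Set TalSpace → ℝ)
    (hmono : ∀ A B : Set TalSpace, MeasurableSet A → MeasurableSet B → A ⊆ B → μ A ≤ μ B)
    (hsubadd : ∀ A B : Set TalSpace, MeasurableSet A → MeasurableSet B →
      μ (A ∪ B) ≤ μ A + μ B)
    (hcont : ∀ A : ℕ → Set TalSpace, (∀ n, MeasurableSet (A n)) → Antitone A →
      (⋂ n, A n) = ∅ → Tendsto (fun n => μ (A n)) atTop (𝓝 0)) :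
    ∀ A : Set (TalSpace × TalSpace), MeasurableSet A →
      Measurable (fun x : TalSpace => μ {y : TalSpace | (x, y) ∈ A}) ∧
      MeasurableSet {x : TalSpace | μ {y : TalSpace | (x, y) ∈ A} = 0} := by
  intro A hA
  have hsections := measurable_submeasure_sections hmono hsubadd hcont hA
  exact ⟨hsections, hsections (measurableSet_singleton 0)⟩
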